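/- Uniqueness theorem: let G = (V,E) be a finite connected graph with nonempty boundary ∂G, and let H and f_l (l = 1,...,m) be nondecreasing in the second variable with H(x,0) = f_l(x,0) = 0, H being 1-Lipschitz in the second variable, both extended oddly to negative arguments. Then the system u^l(x) = max(H(x, ū^l(x) - Σ_{p≠l} ū^p(x)) - f_l(x,u^l(x)), 0) for x ∈ G^o, u^l(x) = φ^l(x) for x ∈ ∂G, has at most one solution: if (u^1,...,u^m) and (v^1,...,v^m) both satisfy the system, then u^l = v^l on V for all l. -/
import Mathlib


open Finset

noncomputable def nbrAvg {V : Type*} [Fintype V] (G : SimpleGraph V) [DecidableRel G.Adj]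
    (u : V → ℝ) (x : V) : ℝ :=
  (∑ y ∈ G.neighborFinset x, u y) / (G.degree x)

def hatFn {V : Type*} {m : ℕ} (u : Fin m → V → ℝ) (l : Fin m) (x : V) : ℝ :=
  u l x - ∑ p ∈ Finset.univ.erase l, u p x

/-- `u` is a (nonnegative) solution of the discrete system with boundary set `Bd`,
nonlinearities `H`, `f`, and boundary data `φ`. -/
def IsSol {V : Type*} {m : ℕ} [Fintype V] (G : SimpleGraph V) [DecidableRel G.Adj]
    (Bd : Set V) (H : V → ℝ → ℝ) (f : Fin m → V → ℝ → ℝ) (φ : Fin m → V → ℝ)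
    (u : Fin m → V → ℝ) : Prop :=
  (∀ l x, 0 ≤ u l x) ∧
  (∀ l x, x ∉ Bd → u l x =
      max (H x (nbrAvg G (u l) x - ∑ p ∈ Finset.univ.erase l, nbrAvg G (u p) x)
           - f l x (u l x)) 0) ∧
  (∀ l x, x ∈ Bd → u l x = φ l x)

set_option linter.unusedSectionVars false
section Aux
variable {V : Type*} {m : ℕ} [Fintype V] {G : SimpleGraph V} [DecidableRel G.Adj]

lemma nbrAvg_nonneg {u : V → ℝ} (hu : ∀ y, 0 ≤ u y) (x : V) : 0 ≤ nbrAvg G u x :=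
  div_nonneg (Finset.sum_nonneg fun y _ => hu y) (Nat.cast_nonneg _)

lemma nbrAvg_mono {a b : V → ℝ} (h : ∀ y, a y ≤ b y) (x : V) :
    nbrAvg G a x ≤ nbrAvg G b x := by
  unfold nbrAvg
  rcases Nat.eq_zero_or_pos (G.degree x) with h0 | h0
  · simp [h0]
  · have hd : (0:ℝ) < (G.degree x : ℝ) := by exact_mod_cast h0
    exact div_le_div_of_nonneg_right (Finset.sum_le_sum (fun y _ => h y)) hd.le

lemma nbrAvg_sub (a b : V → ℝ) (x : V) :
    nbrAvg G (fun y => a y - b y) x = nbrAvg G a x - nbrAvg G b x := by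
  unfold nbrAvg
  rw [← sub_div, ← Finset.sum_sub_distrib]

lemma nbrAvg_neg (a : V → ℝ) (x : V) :
    nbrAvg G (fun y => -(a y)) x = -(nbrAvg G a x) := by
  unfold nbrAvg
  rw [show (∑ y ∈ G.neighborFinset x, (fun y => -(a y)) y)
      = -∑ y ∈ G.neighborFinset x, a y by simp, neg_div]

lemma nbrAvg_hat (u : Fin m → V → ℝ) (l : Fin m) (x : V) :
    nbrAvg G (hatFn u l) x
      = nbrAvg G (u l) x - ∑ p ∈ Finset.univ.erase l, nbrAvg G (u p) x := by
  unfold nbrAvg hatFn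
  rw [← Finset.sum_div, ← sub_div, Finset.sum_sub_distrib, Finset.sum_comm]

lemma hat_add_hat_nonpos (u : Fin m → V → ℝ) (hnn : ∀ p y, 0 ≤ u p y) {a l : Fin m}
    (hal : a ≠ l) (y : V) : hatFn u a y ≤ -(hatFn u l y) := by
  have h1 : u l y ≤ ∑ q ∈ Finset.univ.erase a, u q y :=
    Finset.single_le_sum (fun i _ => hnn i y)
      (Finset.mem_erase.mpr ⟨hal.symm, Finset.mem_univ _⟩)
  have h2 : u a y ≤ ∑ q ∈ Finset.univ.erase l, u q y :=
    Finset.single_le_sum (fun i _ => hnn i y)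
      (Finset.mem_erase.mpr ⟨hal, Finset.mem_univ _⟩)
  simp only [hatFn]
  linarith

lemma hat_eq_self {u : Fin m → V → ℝ} {l : Fin m} {x : V} (h : ∀ p, p ≠ l → u p x = 0) :
    hatFn u l x = u l x := by
  simp only [hatFn]
  rw [Finset.sum_eq_zero (fun p hp => h p (Finset.ne_of_mem_erase hp)), sub_zero]

lemma hat_eq_neg {u : Fin m → V → ℝ} {l b : Fin m} {x : V} (hbl : b ≠ l)
    (h : ∀ p, p ≠ b → u p x = 0) : hatFn u l x = -(u b x) := by
  simp only [hatFn]
  rw [h l hbl.symm,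
    Finset.sum_eq_single_of_mem b (Finset.mem_erase.mpr ⟨hbl, Finset.mem_univ _⟩)
      (fun p _ hpb => h p hpb), zero_sub]

variable {Bd : Set V} {H : V → ℝ → ℝ} {f : Fin m → V → ℝ → ℝ} {φ : Fin m → V → ℝ}
  {u v : Fin m → V → ℝ}

/-- Disjointness of phases of a solution. -/
lemma sol_disjoint (hHmono : ∀ x : V, Monotone (H x)) (hH0 : ∀ x, H x 0 = 0)
    (hfmono : ∀ l x, Monotone (f l x)) (hf0 : ∀ l x, f l x 0 = 0)
    (hφ : ∀ i j : Fin m, i ≠ j → ∀ x, φ i x * φ j x = 0)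
    (hu : IsSol G Bd H f φ u) :
    ∀ (x : V) (l p : Fin m), l ≠ p → u l x = 0 ∨ u p x = 0 := by
  intro x l p hlp
  obtain ⟨hnn, heq, hbd⟩ := hu
  by_cases hx : x ∈ Bd
  · rw [hbd l x hx, hbd p x hx]
    exact mul_eq_zero.mp (hφ l p hlp x)
  · by_contra hcon
    push_neg at hcon
    obtain ⟨h1, h2⟩ := hcon
    have hl : 0 < u l x := lt_of_le_of_ne (hnn l x) (Ne.symm h1)
    have hp : 0 < u p x := lt_of_le_of_ne (hnn p x) (Ne.symm h2)
    have keypos : ∀ q : Fin m, 0 < u q x →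
        0 < nbrAvg G (u q) x - ∑ r ∈ Finset.univ.erase q, nbrAvg G (u r) x := by
      intro q hq
      have he := heq q x hx
      set T := nbrAvg G (u q) x - ∑ r ∈ Finset.univ.erase q, nbrAvg G (u r) x with hT
      have h1' : 0 < H x T - f q x (u q x) := by
        by_contra hle
        push_neg at hle
        rw [he, max_eq_right hle] at hq
        exact lt_irrefl 0 hq
      have hf' : 0 ≤ f q x (u q x) := by
        rw [← hf0 q x]; exact hfmono q x (hnn q x)
      have hH' : 0 < H x T := by linarith
      by_contra hTle
      push_neg at hTle
      have := hHmono x hTle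
      rw [hH0] at this
      linarith
    have t1 := keypos l hl
    have t2 := keypos p hp
    have e1 : nbrAvg G (u p) x ≤ ∑ r ∈ Finset.univ.erase l, nbrAvg G (u r) x :=
      Finset.single_le_sum (fun r _ => nbrAvg_nonneg (fun y => hnn r y) x)
        (Finset.mem_erase.mpr ⟨hlp.symm, Finset.mem_univ _⟩)
    have e2 : nbrAvg G (u l) x ≤ ∑ r ∈ Finset.univ.erase p, nbrAvg G (u r) x :=
      Finset.single_le_sum (fun r _ => nbrAvg_nonneg (fun y => hnn r y) x)
        (Finset.mem_erase.mpr ⟨hlp, Finset.mem_univ _⟩)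
    linarith

lemma sol_posPart (hHmono : ∀ x : V, Monotone (H x)) (hH0 : ∀ x, H x 0 = 0)
    (hfmono : ∀ l x, Monotone (f l x)) (hf0 : ∀ l x, f l x 0 = 0)
    (hφ : ∀ i j : Fin m, i ≠ j → ∀ x, φ i x * φ j x = 0)
    (hu : IsSol G Bd H f φ u) (l : Fin m) (x : V) :
    u l x = max (hatFn u l x) 0 := by
  rcases (hu.1 l x).lt_or_eq with hpos | hzero
  · have hz : ∀ p, p ≠ l → u p x = 0 := fun p hp =>
      (sol_disjoint hHmono hH0 hfmono hf0 hφ hu x p l hp).resolve_right (ne_of_gt hpos)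
    rw [hat_eq_self hz, max_eq_left hpos.le]
  · have hle : hatFn u l x ≤ 0 := by
      simp only [hatFn]
      have : 0 ≤ ∑ p ∈ Finset.univ.erase l, u p x :=
        Finset.sum_nonneg fun p _ => hu.1 p x
      linarith [hzero.symm]
    rw [max_eq_right hle, ← hzero]

lemma sol_eq_pos (hHmono : ∀ x : V, Monotone (H x)) (hH0 : ∀ x, H x 0 = 0)
    (hfmono : ∀ l x, Monotone (f l x)) (hf0 : ∀ l x, f l x 0 = 0)
    (hφ : ∀ i j : Fin m, i ≠ j → ∀ x, φ i x * φ j x = 0)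
    (hu : IsSol G Bd H f φ u) {l : Fin m} {x : V} (hx : x ∉ Bd) (hpos : 0 < u l x) :
    hatFn u l x = H x (nbrAvg G (hatFn u l) x) - f l x (u l x) := by
  have hz : ∀ p, p ≠ l → u p x = 0 := fun p hp =>
    (sol_disjoint hHmono hH0 hfmono hf0 hφ hu x p l hp).resolve_right (ne_of_gt hpos)
  have he := hu.2.1 l x hx
  rw [← nbrAvg_hat] at he
  have hmax : u l x = H x (nbrAvg G (hatFn u l) x) - f l x (u l x) := by
    rcases max_cases (H x (nbrAvg G (hatFn u l) x) - f l x (u l x)) (0:ℝ) with ⟨ha, _⟩ | ⟨ha, _⟩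
    · exact he.trans ha
    · have h0 := he.trans ha
      linarith
  rw [hat_eq_self hz]
  exact hmax

lemma sol_ge (hHmono : ∀ x : V, Monotone (H x)) (hH0 : ∀ x, H x 0 = 0)
    (hHodd : ∀ x s, H x (-s) = -H x s)
    (hfmono : ∀ l x, Monotone (f l x)) (hf0 : ∀ l x, f l x 0 = 0)
    (hφ : ∀ i j : Fin m, i ≠ j → ∀ x, φ i x * φ j x = 0)
    (hu : IsSol G Bd H f φ u) {x : V} (hx : x ∉ Bd) (l : Fin m) :
    H x (nbrAvg G (hatFn u l) x) - f l x (u l x) ≤ hatFn u l x := by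
  by_cases hex : ∃ a, a ≠ l ∧ 0 < u a x
  · obtain ⟨a, hal, hua⟩ := hex
    have hz : ∀ p, p ≠ a → u p x = 0 := fun p hp =>
      (sol_disjoint hHmono hH0 hfmono hf0 hφ hu x p a hp).resolve_right (ne_of_gt hua)
    have hul : u l x = 0 := hz l hal.symm
    have hhat : hatFn u l x = -(u a x) := hat_eq_neg hal hz
    have hea := sol_eq_pos hHmono hH0 hfmono hf0 hφ hu hx hua
    have h1 : hatFn u a x = u a x := hat_eq_self hz
    have hfnn : 0 ≤ f a x (u a x) := by
      rw [← hf0 a x]; exact hfmono a x (hu.1 a x)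
    have hmavg : nbrAvg G (hatFn u a) x ≤ -(nbrAvg G (hatFn u l) x) := by
      have := nbrAvg_mono (G := G) (fun y => hat_add_hat_nonpos u hu.1 hal y) x
      rwa [nbrAvg_neg] at this
    have hHle : H x (nbrAvg G (hatFn u a) x) ≤ -(H x (nbrAvg G (hatFn u l) x)) := by
      have := hHmono x hmavg
      rwa [hHodd] at this
    rw [h1] at hea
    rw [hhat, hul, hf0]
    linarith
  · push_neg at hex
    have hz : ∀ p, p ≠ l → u p x = 0 := fun p hp => le_antisymm (hex p hp) (hu.1 p x)
    have he := hu.2.1 l x hx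
    rw [← nbrAvg_hat] at he
    have hle : H x (nbrAvg G (hatFn u l) x) - f l x (u l x) ≤ u l x := by
      have h2 := le_max_left (H x (nbrAvg G (hatFn u l) x) - f l x (u l x)) (0:ℝ)
      rwa [← he] at h2
    rwa [hat_eq_self hz]

/-- Propagation of the maximum to neighbors. -/
lemma sol_step (hHmono : ∀ x : V, Monotone (H x)) (hH0 : ∀ x, H x 0 = 0)
    (hHodd : ∀ x s, H x (-s) = -H x s)
    (hfmono : ∀ l x, Monotone (f l x)) (hf0 : ∀ l x, f l x 0 = 0)
    (hφ : ∀ i j : Fin m, i ≠ j → ∀ x, φ i x * φ j x = 0)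
    (hHlip : ∀ x s t, |H x s - H x t| ≤ |s - t|)
    (hu : IsSol G Bd H f φ u) (hv : IsSol G Bd H f φ v)
    {M : ℝ} (hM : ∀ (l : Fin m) (y : V), |hatFn u l y - hatFn v l y| ≤ M) (hMpos : 0 < M)
    {x : V} (hx : x ∉ Bd) (hdx : 0 < G.degree x)
    {l : Fin m} (heq : hatFn u l x - hatFn v l x = M) (hpos : 0 < u l x) :
    ∀ y ∈ G.neighborFinset x, hatFn u l y - hatFn v l y = M := by
  have hgu := sol_eq_pos hHmono hH0 hfmono hf0 hφ hu hx hpos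
  have hgv := sol_ge hHmono hH0 hHodd hfmono hf0 hφ hv hx l
  have hzu : ∀ p, p ≠ l → u p x = 0 := fun p hp =>
    (sol_disjoint hHmono hH0 hfmono hf0 hφ hu x p l hp).resolve_right (ne_of_gt hpos)
  have hulx : hatFn u l x = u l x := hat_eq_self hzu
  have hvpp : v l x = max (hatFn v l x) 0 := sol_posPart hHmono hH0 hfmono hf0 hφ hv l x
  have hvle : v l x ≤ u l x := by
    rw [hvpp]
    apply max_le _ hpos.le
    have : hatFn v l x = u l x - M := by rw [← hulx]; linarith
    linarith
  have hfle : f l x (v l x) ≤ f l x (u l x) := hfmono l x hvle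
  set gA := nbrAvg G (hatFn u l) x with hgA
  set hA := nbrAvg G (hatFn v l) x with hhA
  have hMle : M ≤ H x gA - H x hA := by linarith
  have hgt : hA < gA := by
    by_contra hle
    push_neg at hle
    have := hHmono x hle
    linarith
  have h2 : M ≤ gA - hA := by
    have h3 : H x gA - H x hA ≤ |gA - hA| := le_trans (le_abs_self _) (hHlip x gA hA)
    rw [abs_of_pos (sub_pos.mpr hgt)] at h3
    linarith
  have havg : M ≤ nbrAvg G (fun y => hatFn u l y - hatFn v l y) x := by
    rw [nbrAvg_sub]
    exact h2
  intro y hy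
  by_contra hne
  have hlt : hatFn u l y - hatFn v l y < M :=
    lt_of_le_of_ne (le_trans (le_abs_self _) (hM l y)) hne
  have hsum : ∑ z ∈ G.neighborFinset x, (hatFn u l z - hatFn v l z)
      < (G.degree x : ℝ) * M := by
    have h4 : ∑ z ∈ G.neighborFinset x, (hatFn u l z - hatFn v l z)
        < ∑ _z ∈ G.neighborFinset x, M :=
      Finset.sum_lt_sum (fun z _ => le_trans (le_abs_self _) (hM l z)) ⟨y, hy, hlt⟩
    rwa [Finset.sum_const, nsmul_eq_mul, SimpleGraph.card_neighborFinset_eq_degree] at h4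
  have hdR : (0:ℝ) < (G.degree x : ℝ) := by exact_mod_cast hdx
  have : nbrAvg G (fun z => hatFn u l z - hatFn v l z) x < M := by
    unfold nbrAvg
    rw [div_lt_iff₀ hdR]
    calc ∑ z ∈ G.neighborFinset x, (hatFn u l z - hatFn v l z)
        < (G.degree x : ℝ) * M := hsum
      _ = M * (G.degree x : ℝ) := mul_comm _ _
  linarith

/-- At a point realizing the max with the right sign, find an orientation with
positive value of the leading phase. -/
lemma sol_orient_aux (hHmono : ∀ x : V, Monotone (H x)) (hH0 : ∀ x, H x 0 = 0)
    (hfmono : ∀ l x, Monotone (f l x)) (hf0 : ∀ l x, f l x 0 = 0)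
    (hφ : ∀ i j : Fin m, i ≠ j → ∀ x, φ i x * φ j x = 0)
    (hu : IsSol G Bd H f φ u) (hv : IsSol G Bd H f φ v)
    {M : ℝ} (hM : ∀ (l : Fin m) (y : V), |hatFn u l y - hatFn v l y| ≤ M) (hMpos : 0 < M)
    {x : V} {l : Fin m} (heq : hatFn u l x - hatFn v l x = M) :
    (∃ l', hatFn u l' x - hatFn v l' x = M ∧ 0 < u l' x) ∨
    (∃ l', hatFn v l' x - hatFn u l' x = M ∧ 0 < v l' x) := by
  rcases (hu.1 l x).lt_or_eq with hpos | hzero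
  · exact Or.inl ⟨l, heq, hpos⟩
  · have hgle : hatFn u l x ≤ 0 := by
      simp only [hatFn]
      have h0 : 0 ≤ ∑ p ∈ Finset.univ.erase l, u p x :=
        Finset.sum_nonneg fun p _ => hu.1 p x
      linarith [hzero.symm]
    have hhlt : hatFn v l x < 0 := by linarith
    have hSpos : 0 < ∑ p ∈ Finset.univ.erase l, v p x := by
      simp only [hatFn] at hhlt
      have := hv.1 l x
      linarith
    have hexb : ∃ b ∈ Finset.univ.erase l, 0 < v b x := by
      by_contra hc
      push_neg at hc
      have h0 : ∑ p ∈ Finset.univ.erase l, v p x = 0 :=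
        Finset.sum_eq_zero fun p hp => le_antisymm (hc p hp) (hv.1 p x)
      rw [h0] at hSpos
      exact lt_irrefl 0 hSpos
    obtain ⟨b, hbmem, hvb⟩ := hexb
    have hbl : b ≠ l := (Finset.mem_erase.mp hbmem).1
    have hzv : ∀ p, p ≠ b → v p x = 0 := fun p hp =>
      (sol_disjoint hHmono hH0 hfmono hf0 hφ hv x p b hp).resolve_right (ne_of_gt hvb)
    have hhv : hatFn v l x = -(v b x) := hat_eq_neg hbl hzv
    by_cases hexa : ∃ a, a ≠ l ∧ 0 < u a x
    · obtain ⟨a, hal, hua⟩ := hexa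
      have hzu : ∀ p, p ≠ a → u p x = 0 := fun p hp =>
        (sol_disjoint hHmono hH0 hfmono hf0 hφ hu x p a hp).resolve_right (ne_of_gt hua)
      have hhu : hatFn u l x = -(u a x) := hat_eq_neg hal hzu
      by_cases hab : a = b
      · subst hab
        refine Or.inr ⟨a, ?_, hvb⟩
        rw [hat_eq_self hzv, hat_eq_self hzu]
        rw [hhu, hhv] at heq
        linarith
      · exfalso
        have h1 : hatFn u a x = u a x := hat_eq_self hzu
        have h2 : hatFn v a x = -(v b x) := hat_eq_neg (fun h => hab h.symm) hzv
        have h3 := hM a x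
        rw [h1, h2, abs_le] at h3
        rw [hhu, hhv] at heq
        linarith [h3.2]
    · push_neg at hexa
      have hzu : ∀ p, p ≠ l → u p x = 0 := fun p hp => le_antisymm (hexa p hp) (hu.1 p x)
      have hzu' : ∀ p, p ≠ b → u p x = 0 := by
        intro p hp
        by_cases hpl : p = l
        · rw [hpl]; exact hzero.symm
        · exact hzu p hpl
      have hhu0 : hatFn u l x = 0 := by rw [hat_eq_self hzu]; exact hzero.symm
      have hhub : hatFn u b x = 0 := by rw [hat_eq_self hzu']; exact hzu b hbl
      refine Or.inr ⟨b, ?_, hvb⟩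
      rw [hat_eq_self hzv, hhub, sub_zero]
      rw [hhu0, hhv] at heq
      linarith

/-- On the boundary the hatted functions agree. -/
lemma hat_bd (hu : IsSol G Bd H f φ u) (hv : IsSol G Bd H f φ v) {x : V} (hx : x ∈ Bd)
    (l : Fin m) : hatFn u l x = hatFn v l x := by
  simp only [hatFn]
  rw [hu.2.2 l x hx, hv.2.2 l x hx]
  congr 1
  exact Finset.sum_congr rfl fun p _ => by rw [hu.2.2 p x hx, hv.2.2 p x hx]

end Aux

theorem uniqueness {V : Type*} {m : ℕ} [Fintype V] (G : SimpleGraph V) [DecidableRel G.Adj]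
    (Bd : Set V) (H : V → ℝ → ℝ) (f : Fin m → V → ℝ → ℝ) (φ : Fin m → V → ℝ)
    (hconn : G.Connected) (hBd : Bd.Nonempty)
    (hHmono : ∀ x : V, Monotone (H x)) (hH0 : ∀ x, H x 0 = 0)
    (hHodd : ∀ x s, H x (-s) = -H x s)
    (hfmono : ∀ l x, Monotone (f l x)) (hf0 : ∀ l x, f l x 0 = 0)
    (hfodd : ∀ l x s, f l x (-s) = -f l x s)
    (hφ : ∀ i j : Fin m, i ≠ j → ∀ x, φ i x * φ j x = 0)
    (hφnn : ∀ l x, 0 ≤ φ l x)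
    (hHlip : ∀ x s t, |H x s - H x t| ≤ |s - t|)
    (u v : Fin m → V → ℝ) (hu : IsSol G Bd H f φ u) (hv : IsSol G Bd H f φ v) :
    ∀ (l : Fin m) (x : V), u l x = v l x := by
  intro l x
  obtain ⟨z, hz⟩ := hBd
  obtain ⟨⟨l0, x0⟩, -, hmax⟩ := Finset.exists_max_image (Finset.univ : Finset (Fin m × V))
    (fun p => |hatFn u p.1 p.2 - hatFn v p.1 p.2|) ⟨(l, x), Finset.mem_univ _⟩
  set M := |hatFn u l0 x0 - hatFn v l0 x0| with hMdef
  have hM : ∀ (l' : Fin m) (y : V), |hatFn u l' y - hatFn v l' y| ≤ M :=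
    fun l' y => hmax (l', y) (Finset.mem_univ _)
  have hM0 : 0 ≤ M := abs_nonneg _
  have hMzero : M = 0 := by
    by_contra hcon
    have hMpos : 0 < M := lt_of_le_of_ne hM0 (Ne.symm hcon)
    have hM' : ∀ (l' : Fin m) (y : V), |hatFn v l' y - hatFn u l' y| ≤ M := by
      intro l' y
      rw [abs_sub_comm]
      exact hM l' y
    have main : ∀ (y zz : V) (_w : G.Walk y zz), zz ∈ Bd →
        (∃ l', |hatFn u l' y - hatFn v l' y| = M) → False := by
      intro y zz w
      induction w with
      | nil =>
        rintro hzz ⟨l', hl'⟩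
        rw [hat_bd hu hv hzz l', sub_self, abs_zero] at hl'
        exact hcon hl'.symm
      | @cons a b c hadj p ih =>
        rintro hzz ⟨l', hl'⟩
        by_cases hab : a ∈ Bd
        · rw [hat_bd hu hv hab l', sub_self, abs_zero] at hl'
          exact hcon hl'.symm
        · have hdeg : 0 < G.degree a := (G.degree_pos_iff_exists_adj a).mpr ⟨b, hadj⟩
          have hmemb : b ∈ G.neighborFinset a := (SimpleGraph.mem_neighborFinset G a b).mpr hadj
          rcases abs_eq hM0 |>.mp hl' with he | he
          · rcases sol_orient_aux hHmono hH0 hfmono hf0 hφ hu hv hM hMpos he with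
              ⟨l2, he2, hp2⟩ | ⟨l2, he2, hp2⟩
            · have hstep := sol_step hHmono hH0 hHodd hfmono hf0 hφ hHlip hu hv hM hMpos
                hab hdeg he2 hp2 b hmemb
              exact ih hzz ⟨l2, by rw [hstep]; exact abs_of_pos hMpos⟩
            · have hstep := sol_step hHmono hH0 hHodd hfmono hf0 hφ hHlip hv hu hM' hMpos
                hab hdeg he2 hp2 b hmemb
              exact ih hzz ⟨l2, by rw [abs_sub_comm, hstep]; exact abs_of_pos hMpos⟩
          · have he' : hatFn v l' a - hatFn u l' a = M := by linarith
            rcases sol_orient_aux hHmono hH0 hfmono hf0 hφ hv hu hM' hMpos he' with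
              ⟨l2, he2, hp2⟩ | ⟨l2, he2, hp2⟩
            · have hstep := sol_step hHmono hH0 hHodd hfmono hf0 hφ hHlip hv hu hM' hMpos
                hab hdeg he2 hp2 b hmemb
              exact ih hzz ⟨l2, by rw [abs_sub_comm, hstep]; exact abs_of_pos hMpos⟩
            · have hstep := sol_step hHmono hH0 hHodd hfmono hf0 hφ hHlip hu hv hM hMpos
                hab hdeg he2 hp2 b hmemb
              exact ih hzz ⟨l2, by rw [hstep]; exact abs_of_pos hMpos⟩
    exact (hconn.preconnected x0 z).elim fun w => main x0 z w hz ⟨l0, rfl⟩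
  have hhat : hatFn u l x = hatFn v l x := by
    have h1 := hM l x
    rw [hMzero, abs_nonpos_iff, sub_eq_zero] at h1
    exact h1
  rw [sol_posPart hHmono hH0 hfmono hf0 hφ hu l x,
    sol_posPart hHmono hH0 hfmono hf0 hφ hv l x, hhat]
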